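/- Let P₁, …, P_k (k ≥ 2) be patches containing altogether p < 6 pentagons. Then there exists a single patch P with exactly p pentagons, strictly more hexagons than P₁, …, P_k have in total, and boundary length b(P) = b(P₁) + ⋯ + b(P_k). -/
import Mathlib

/-- Auxiliary: from an even boundary length `b` below an even target `t`,
repeatedly adding hexagons must eventually produce a patch with boundary
exactly `t` and strictly more hexagons (by boundedness of the hexagon
number at each fixed boundary length `< t`, together with parity). -/
theorem pump_even (IsPatch : ℕ → ℕ → ℕ → Prop)
    (haddhex : ∀ p h b, p < 6 → IsPatch p h b →
      IsPatch p (h + 1) (b + 2) ∨ IsPatch p (h + 1) b ∨ IsPatch p (h + 1) (b - 2))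
    (hbound : ∀ p b, p < 6 → ∃ H, ∀ h, IsPatch p h b → h ≤ H)
    (p : ℕ) (hp : p < 6) (t : ℕ) (ht : 2 ∣ t)
    (h b : ℕ) (hb : 2 ∣ b) (hbt : b < t) (hpa : IsPatch p h b) :
    ∃ h', h < h' ∧ IsPatch p h' t := by
  choose F hF using hbound
  set N := (Finset.range t).sup (fun x => F p x hp) with hN
  have key : ∀ m h b, 2 ∣ b → b < t → IsPatch p h b → N + 1 - h ≤ m →
      ∃ h', h < h' ∧ IsPatch p h' t := by
    intro m
    induction m with
    | zero =>
      intro h b hb hbt hpa hm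
      exfalso
      have h1 : h ≤ N :=
        le_trans (hF p b hp h hpa) (Finset.le_sup (f := fun x => F p x hp) (Finset.mem_range.2 hbt))
      omega
    | succ m ih =>
      intro h b hb hbt hpa hm
      have h1 : h ≤ N :=
        le_trans (hF p b hp h hpa) (Finset.le_sup (f := fun x => F p x hp) (Finset.mem_range.2 hbt))
      rcases haddhex p h b hp hpa with h2 | h2 | h2
      · have hle : b + 2 ≤ t := by omega
        rcases eq_or_lt_of_le hle with e | lt
        · exact ⟨h + 1, by omega, by rwa [e] at h2⟩
        · obtain ⟨h', hh', hp'⟩ := ih (h + 1) (b + 2) (by omega) lt h2 (by omega)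
          exact ⟨h', by omega, hp'⟩
      · obtain ⟨h', hh', hp'⟩ := ih (h + 1) b hb hbt h2 (by omega)
        exact ⟨h', by omega, hp'⟩
      · obtain ⟨h', hh', hp'⟩ := ih (h + 1) (b - 2) (by omega) (by omega) h2 (by omega)
        exact ⟨h', by omega, hp'⟩
  exact key (N + 1 - h) h b hb hbt hpa le_rfl

/-- Auxiliary: two patches can be combined into one with the same total
number of pentagons, strictly more hexagons, and boundary length exactly the
sum of the two boundary lengths. -/
theorem pair_patches (IsPatch : ℕ → ℕ → ℕ → Prop)
    (hglue : ∀ p₁ h₁ b₁ p₂ h₂ b₂, p₁ + p₂ < 6 →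
      IsPatch p₁ h₁ b₁ → IsPatch p₂ h₂ b₂ →
      IsPatch (p₁ + p₂) (h₁ + h₂) (b₁ + b₂ - 2))
    (haddhex : ∀ p h b, p < 6 → IsPatch p h b →
      IsPatch p (h + 1) (b + 2) ∨ IsPatch p (h + 1) b ∨ IsPatch p (h + 1) (b - 2))
    (hbound : ∀ p b, p < 6 → ∃ H, ∀ h, IsPatch p h b → h ≤ H)
    (p₁ h₁ b₁ p₂ h₂ b₂ : ℕ) (hp : p₁ + p₂ < 6)
    (P1 : IsPatch p₁ h₁ b₁) (P2 : IsPatch p₂ h₂ b₂) :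
    ∃ H, IsPatch (p₁ + p₂) H (b₁ + b₂) ∧ h₁ + h₂ < H := by
  rcases Nat.even_or_odd b₁ with he₁ | ho₁
  · obtain ⟨c₁, hc₁⟩ := he₁ -- pump patch 1 up to boundary b₁ + 2, then glue
    obtain ⟨h₁', hlt, hP⟩ := pump_even IsPatch haddhex hbound p₁ (by omega)
      (b₁ + 2) (by omega) h₁ b₁ (by omega) (by omega) P1
    have := hglue p₁ h₁' (b₁ + 2) p₂ h₂ b₂ hp hP P2
    have e : b₁ + 2 + b₂ - 2 = b₁ + b₂ := by omega
    rw [e] at this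
    exact ⟨h₁' + h₂, this, by omega⟩
  · rcases Nat.even_or_odd b₂ with he₂ | ho₂
    · obtain ⟨c₂, hc₂⟩ := he₂ -- pump patch 2 up to boundary b₂ + 2, then glue
      obtain ⟨h₂', hlt, hP⟩ := pump_even IsPatch haddhex hbound p₂ (by omega)
        (b₂ + 2) (by omega) h₂ b₂ (by omega) (by omega) P2
      have := hglue p₁ h₁ b₁ p₂ h₂' (b₂ + 2) hp P1 hP
      have e : b₁ + (b₂ + 2) - 2 = b₁ + b₂ := by omega
      rw [e] at this
      exact ⟨h₁ + h₂', this, by omega⟩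
    · -- both boundaries odd: glue first (even result), then pump back up
      have hg := hglue p₁ h₁ b₁ p₂ h₂ b₂ hp P1 P2
      obtain ⟨c₁, hc₁⟩ := ho₁
      obtain ⟨c₂, hc₂⟩ := ho₂
      obtain ⟨h', hlt, hP⟩ := pump_even IsPatch haddhex hbound (p₁ + p₂) hp
        (b₁ + b₂) (by omega) (h₁ + h₂) (b₁ + b₂ - 2)
        (by omega) (by omega) hg
      exact ⟨h', hP, hlt⟩

/-- Auxiliary: list version of the combination theorem. -/
theorem list_patches (IsPatch : ℕ → ℕ → ℕ → Prop)
    (hglue : ∀ p₁ h₁ b₁ p₂ h₂ b₂, p₁ + p₂ < 6 →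
      IsPatch p₁ h₁ b₁ → IsPatch p₂ h₂ b₂ →
      IsPatch (p₁ + p₂) (h₁ + h₂) (b₁ + b₂ - 2))
    (haddhex : ∀ p h b, p < 6 → IsPatch p h b →
      IsPatch p (h + 1) (b + 2) ∨ IsPatch p (h + 1) b ∨ IsPatch p (h + 1) (b - 2))
    (hbound : ∀ p b, p < 6 → ∃ H, ∀ h, IsPatch p h b → h ≤ H) :
    ∀ l : List (ℕ × ℕ × ℕ), l ≠ [] →
      (∀ x ∈ l, IsPatch x.1 x.2.1 x.2.2) →
      (l.map fun x => x.1).sum < 6 →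
      ∃ H, IsPatch (l.map fun x => x.1).sum H (l.map fun x => x.2.2).sum ∧
        (l.map fun x => x.2.1).sum + (l.length - 1) ≤ H := by
  intro l
  induction l with
  | nil => intro hne; exact absurd rfl hne
  | cons x l ih =>
    intro _ hmem hsum
    rcases l with _ | ⟨y, l'⟩
    · refine ⟨x.2.1, ?_, ?_⟩ <;> simp [hmem x (by simp)]
    · have hsum' : ((y :: l').map fun x => x.1).sum < 6 := by
        simp only [List.map_cons, List.sum_cons] at hsum ⊢; omega
      obtain ⟨H', hP', hH'⟩ := ih (by simp) (fun z hz => hmem z (by simp [hz])) hsum'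
      obtain ⟨H, hP, hH⟩ := pair_patches IsPatch hglue haddhex hbound
        x.1 x.2.1 x.2.2 (((y :: l').map fun x => x.1).sum) H'
        (((y :: l').map fun x => x.2.2).sum)
        (by simp only [List.map_cons, List.sum_cons] at hsum ⊢; omega)
        (hmem x (by simp)) hP'
      refine ⟨H, ?_, ?_⟩
      · simpa using hP
      · simp only [List.map_cons, List.sum_cons, List.length_cons] at hH' ⊢
        omega

/-- Let `P₁, …, P_k` (`k ≥ 2`) be patches containing altogether fewer than 6
pentagons.  Then there is a single patch with the same total number of
pentagons, strictly more hexagons than all the `Pᵢ` together, and boundary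
length equal to the sum of the boundary lengths of the `Pᵢ`.
`IsPatch p h b` abstracts the existence of a 5-6-patch with `p` pentagons, `h`
hexagons and boundary length `b`; the hypotheses record the available tools:
gluing two patches along boundary edges with degree-2 endpoints, adding a
hexagon along a short maximal degree-3 boundary run (changing the boundary
length by `+2`, `0` or `-2`), and boundedness of the hexagon number for fixed
pentagon number and boundary length. -/
theorem combine_patches (IsPatch : ℕ → ℕ → ℕ → Prop)
    (hglue : ∀ p₁ h₁ b₁ p₂ h₂ b₂, p₁ + p₂ < 6 →
      IsPatch p₁ h₁ b₁ → IsPatch p₂ h₂ b₂ →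
      IsPatch (p₁ + p₂) (h₁ + h₂) (b₁ + b₂ - 2))
    (haddhex : ∀ p h b, p < 6 → IsPatch p h b →
      IsPatch p (h + 1) (b + 2) ∨ IsPatch p (h + 1) b ∨ IsPatch p (h + 1) (b - 2))
    (hbound : ∀ p b, p < 6 → ∃ H, ∀ h, IsPatch p h b → h ≤ H)
    (k : ℕ) (hk : 2 ≤ k) (p h b : Fin k → ℕ)
    (hpatch : ∀ i, IsPatch (p i) (h i) (b i))
    (hsum : ∑ i, p i < 6) :
    ∃ H, IsPatch (∑ i, p i) H (∑ i, b i) ∧ ∑ i, h i < H := by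
  set l : List (ℕ × ℕ × ℕ) := List.ofFn (fun i => (p i, h i, b i)) with hl
  have e1 : (l.map fun x => x.1).sum = ∑ i, p i := by
    simp [hl, List.map_ofFn, Function.comp, List.sum_ofFn]
  have e2 : (l.map fun x => x.2.1).sum = ∑ i, h i := by
    simp [hl, List.map_ofFn, Function.comp, List.sum_ofFn]
  have e3 : (l.map fun x => x.2.2).sum = ∑ i, b i := by
    simp [hl, List.map_ofFn, Function.comp, List.sum_ofFn]
  have hlen : l.length = k := by simp [hl]
  have hne : l ≠ [] := by
    intro hcon
    rw [hcon] at hlen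
    simp at hlen
    omega
  have hmem : ∀ x ∈ l, IsPatch x.1 x.2.1 x.2.2 := by
    intro x hx
    rw [hl, List.mem_ofFn] at hx
    obtain ⟨i, rfl⟩ := hx
    exact hpatch i
  obtain ⟨H, hP, hH⟩ := list_patches IsPatch hglue haddhex hbound l hne hmem
    (by rw [e1]; exact hsum)
  rw [e1, e3] at hP
  rw [e2, hlen] at hH
  exact ⟨H, hP, by omega⟩
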